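/- For every infinitely differentiable function f on (0,∞) and every nonnegative integer n, the n-fold application of the operator x^{1−λ} d/dx to f equals x ↦ ∑_{k=0}^{n} S_{2,λ}(n,k) · x^{k − nλ} · f^{(k)}(x). -/

import Mathlib

open Finset

/-- Degenerate falling factorial `(x)_{n,λ}`. -/
noncomputable def degFall (lam x : ℝ) (n : ℕ) : ℝ := ∏ i ∈ Finset.range n, (x - i * lam)

/-- Ordinary falling factorial `(x)_k`. -/
noncomputable def fall (x : ℝ) (k : ℕ) : ℝ := ∏ i ∈ Finset.range k, (x - i)

/-- The operator `f ↦ (x ↦ x^{1-λ} f'(x))`. -/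
noncomputable def Lop (lam : ℝ) (f : ℝ → ℝ) : ℝ → ℝ := fun x => x ^ ((1 : ℝ) - lam) * deriv f x

lemma fall_nat_self_pos (j : ℕ) : 0 < fall (j : ℝ) j := by
  unfold fall
  apply Finset.prod_pos
  intro i hi
  have : i < j := Finset.mem_range.mp hi
  have : (i : ℝ) < j := by exact_mod_cast this
  linarith

lemma fall_nat_eq_zero {j k : ℕ} (h : j < k) : fall (j : ℝ) k = 0 := by
  unfold fall
  exact Finset.prod_eq_zero (Finset.mem_range.mpr h) (by simp)

lemma lin_indep {N : ℕ} {c : ℕ → ℝ}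
    (h : ∀ x : ℝ, ∑ k ∈ range N, c k * fall x k = 0) :
    ∀ k < N, c k = 0 := by
  intro k
  induction k using Nat.strong_induction_on with
  | _ j ih =>
    intro hj
    have hsum := h (j : ℝ)
    rw [Finset.sum_eq_single j] at hsum
    · have := fall_nat_self_pos j
      rcases mul_eq_zero.mp hsum with h' | h'
      · exact h'
      · exact absurd h' this.ne'
    · intro b hb hbj
      rcases lt_or_gt_of_ne hbj with hb' | hb'
      · rw [ih b hb' (hb'.trans hj), zero_mul]
      · rw [fall_nat_eq_zero hb', mul_zero]
    · intro hjn
      exact absurd (Finset.mem_range.mpr hj) hjn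

lemma degFall_succ (lam x : ℝ) (n : ℕ) :
    degFall lam x (n + 1) = degFall lam x n * (x - n * lam) := by
  unfold degFall; rw [Finset.prod_range_succ]

lemma fall_succ (x : ℝ) (k : ℕ) : fall x (k + 1) = fall x k * (x - k) := by
  unfold fall; rw [Finset.prod_range_succ]

/-- the recurrence -/
lemma S2_rec (lam : ℝ) (S2 : ℕ → ℕ → ℝ)
    (hS2 : ∀ (n : ℕ) (x : ℝ), degFall lam x n = ∑ k ∈ range (n + 1), S2 n k * fall x k)
    (n : ℕ) :
    ∀ k < n + 2, S2 (n + 1) k =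
      (if 1 ≤ k then S2 n (k - 1) else 0) +
      (if k ≤ n then ((k : ℝ) - n * lam) * S2 n k else 0) := by
  have key : ∀ x : ℝ, ∑ k ∈ range (n + 2),
      (S2 (n + 1) k - ((if 1 ≤ k then S2 n (k - 1) else 0) +
        (if k ≤ n then ((k : ℝ) - n * lam) * S2 n k else 0))) * fall x k = 0 := by
    intro x
    have h1 : ∑ k ∈ range (n + 2), S2 (n + 1) k * fall x k = degFall lam x (n + 1) :=
      (hS2 (n + 1) x).symm
    have h2 : degFall lam x (n + 1) = (∑ k ∈ range (n + 1), S2 n k * fall x k) * (x - n * lam) := by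
      rw [degFall_succ, hS2 n x]
    have h3 : (∑ k ∈ range (n + 1), S2 n k * fall x k) * (x - n * lam)
        = ∑ k ∈ range (n + 1), S2 n k * fall x (k + 1)
          + ∑ k ∈ range (n + 1), ((k : ℝ) - n * lam) * S2 n k * fall x k := by
      rw [Finset.sum_mul, ← Finset.sum_add_distrib]
      apply Finset.sum_congr rfl
      intro k _
      rw [fall_succ]
      ring
    have h4 : ∑ k ∈ range (n + 2), (if 1 ≤ k then S2 n (k - 1) else 0) * fall x k
        = ∑ k ∈ range (n + 1), S2 n k * fall x (k + 1) := by
      rw [Finset.sum_range_succ']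
      simp
    have h5 : ∑ k ∈ range (n + 2), (if k ≤ n then ((k : ℝ) - n * lam) * S2 n k else 0) * fall x k
        = ∑ k ∈ range (n + 1), ((k : ℝ) - n * lam) * S2 n k * fall x k := by
      rw [Finset.sum_range_succ]
      simp only [Nat.lt_irrefl, if_neg (by omega : ¬ n + 1 ≤ n), zero_mul, add_zero]
      apply Finset.sum_congr rfl
      intro k hk
      rw [if_pos (Nat.lt_succ_iff.mp (Finset.mem_range.mp hk))]
    have hsplit : ∑ k ∈ range (n + 2),
        (S2 (n + 1) k - ((if 1 ≤ k then S2 n (k - 1) else 0) +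
          (if k ≤ n then ((k : ℝ) - n * lam) * S2 n k else 0))) * fall x k
        = ∑ k ∈ range (n + 2), S2 (n + 1) k * fall x k
          - (∑ k ∈ range (n + 2), (if 1 ≤ k then S2 n (k - 1) else 0) * fall x k
             + ∑ k ∈ range (n + 2), (if k ≤ n then ((k : ℝ) - n * lam) * S2 n k else 0) * fall x k) := by
      rw [← Finset.sum_add_distrib, ← Finset.sum_sub_distrib]
      exact Finset.sum_congr rfl fun k _ => by ring
    rw [hsplit, h1, h2, h3, h4, h5]
    ring
  intro k hk
  have := lin_indep key k hk
  linarith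

lemma iteratedDerivWithin_Ioi (f : ℝ → ℝ) (k : ℕ) :
    Set.EqOn (iteratedDerivWithin k f (Set.Ioi 0)) (iteratedDeriv k f) (Set.Ioi 0) := by
  induction k with
  | zero => intro x _; simp [iteratedDerivWithin_zero, iteratedDeriv_zero]
  | succ k ih =>
    intro x hx
    rw [iteratedDerivWithin_succ, iteratedDeriv_succ,
      derivWithin_of_isOpen isOpen_Ioi hx]
    exact Filter.EventuallyEq.deriv_eq
      (by filter_upwards [isOpen_Ioi.mem_nhds hx] with y hy using ih hy)

lemma hasDerivAt_iteratedDeriv {f : ℝ → ℝ} (hf : ContDiffOn ℝ (⊤ : ℕ∞) f (Set.Ioi 0)) (k : ℕ)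
    {x : ℝ} (hx : 0 < x) :
    HasDerivAt (iteratedDeriv k f) (iteratedDeriv (k + 1) f x) x := by
  have hdo : DifferentiableOn ℝ (iteratedDerivWithin k f (Set.Ioi 0)) (Set.Ioi 0) :=
    hf.differentiableOn_iteratedDerivWithin (by exact_mod_cast lt_top_iff_ne_top.mpr (by simp))
      isOpen_Ioi.uniqueDiffOn
  have heq : (iteratedDerivWithin k f (Set.Ioi 0)) =ᶠ[nhds x] (iteratedDeriv k f) := by
    filter_upwards [isOpen_Ioi.mem_nhds hx] with y hy using iteratedDerivWithin_Ioi f k hy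
  have hdA : DifferentiableAt ℝ (iteratedDeriv k f) x :=
    heq.differentiableAt_iff.mp ((hdo x hx).differentiableAt (isOpen_Ioi.mem_nhds hx))
  rw [iteratedDeriv_succ]
  exact hdA.hasDerivAt

/-- for `f` infinitely differentiable on `(0,∞)`,
`(x^{1−λ} d/dx)^n f = ∑_{k=0}^n S_{2,λ}(n,k) x^{k−nλ} f^{(k)}(x)`. -/
theorem lop_iterate_eq_stirling_sum (lam : ℝ) (S2 : ℕ → ℕ → ℝ)
    (hS2 : ∀ (n : ℕ) (x : ℝ), degFall lam x n = ∑ k ∈ range (n + 1), S2 n k * fall x k)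
    (f : ℝ → ℝ) (hf : ContDiffOn ℝ (⊤ : ℕ∞) f (Set.Ioi 0))
    (n : ℕ) (x : ℝ) (hx : 0 < x) :
    (Lop lam)^[n] f x =
      ∑ k ∈ range (n + 1), S2 n k * x ^ ((k : ℝ) - n * lam) * iteratedDeriv k f x := by
  induction n generalizing x with
  | zero =>
    have h00 : S2 0 0 = 1 := by
      have := hS2 0 0
      simp [degFall, fall] at this
      linarith
    simp [h00, Real.rpow_zero]
  | succ n ih =>
    rw [Function.iterate_succ_apply']
    show x ^ ((1:ℝ) - lam) * deriv ((Lop lam)^[n] f) x = _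
    have hgd : deriv ((Lop lam)^[n] f) x
        = deriv (fun y => ∑ k ∈ range (n + 1),
            S2 n k * y ^ ((k : ℝ) - n * lam) * iteratedDeriv k f y) x :=
      Filter.EventuallyEq.deriv_eq
        (by filter_upwards [isOpen_Ioi.mem_nhds hx] with y hy using ih y hy)
    have hterm : ∀ k ∈ range (n + 1),
        HasDerivAt (fun y => S2 n k * y ^ ((k : ℝ) - n * lam) * iteratedDeriv k f y)
          (S2 n k * (((k:ℝ) - n*lam) * x ^ ((k:ℝ) - n*lam - 1)) * iteratedDeriv k f x
            + S2 n k * x ^ ((k:ℝ) - n*lam) * iteratedDeriv (k+1) f x) x := by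
      intro k _
      have h1 : HasDerivAt (fun y : ℝ => y ^ ((k:ℝ) - n*lam))
          (((k:ℝ) - n*lam) * x ^ ((k:ℝ) - n*lam - 1)) x :=
        Real.hasDerivAt_rpow_const (Or.inl hx.ne')
      have h2 := hasDerivAt_iteratedDeriv hf k hx
      have h3 := (h1.const_mul (S2 n k)).fun_mul h2
      convert h3 using 1
    have hg : HasDerivAt (fun y => ∑ k ∈ range (n + 1),
          S2 n k * y ^ ((k : ℝ) - n * lam) * iteratedDeriv k f y)
        (∑ k ∈ range (n + 1),
          (S2 n k * (((k:ℝ) - n*lam) * x ^ ((k:ℝ) - n*lam - 1)) * iteratedDeriv k f x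
            + S2 n k * x ^ ((k:ℝ) - n*lam) * iteratedDeriv (k+1) f x)) x :=
      HasDerivAt.fun_sum hterm
    rw [hgd, hg.deriv, Finset.mul_sum]
    have hLHS : ∑ k ∈ range (n + 1), x ^ ((1:ℝ) - lam) *
          (S2 n k * (((k:ℝ) - n*lam) * x ^ ((k:ℝ) - n*lam - 1)) * iteratedDeriv k f x
            + S2 n k * x ^ ((k:ℝ) - n*lam) * iteratedDeriv (k+1) f x)
        = (∑ k ∈ range (n + 1),
            S2 n k * (((k:ℝ) - n*lam) * x ^ ((k:ℝ) - ((n:ℝ)+1)*lam)) * iteratedDeriv k f x)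
          + ∑ k ∈ range (n + 1),
            S2 n k * x ^ (((k:ℝ)+1) - ((n:ℝ)+1)*lam) * iteratedDeriv (k+1) f x := by
      rw [← Finset.sum_add_distrib]
      refine Finset.sum_congr rfl fun k _ => ?_
      have e1 : x ^ ((1:ℝ)-lam) * x ^ ((k:ℝ) - n*lam - 1) = x ^ ((k:ℝ) - ((n:ℝ)+1)*lam) := by
        rw [← Real.rpow_add hx]; ring_nf
      have e2 : x ^ ((1:ℝ)-lam) * x ^ ((k:ℝ) - n*lam) = x ^ (((k:ℝ)+1) - ((n:ℝ)+1)*lam) := by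
        rw [← Real.rpow_add hx]; ring_nf
      linear_combination (S2 n k * ((k:ℝ) - n*lam) * iteratedDeriv k f x) * e1
        + (S2 n k * iteratedDeriv (k+1) f x) * e2
    rw [hLHS]
    have hrec := S2_rec lam S2 hS2 n
    have hRHS : ∑ k ∈ range (n + 2), S2 (n+1) k * x ^ ((k:ℝ) - (↑(n+1):ℝ) * lam)
          * iteratedDeriv k f x
        = (∑ k ∈ range (n + 1),
            S2 n k * x ^ (((k:ℝ)+1) - ((n:ℝ)+1)*lam) * iteratedDeriv (k+1) f x)
          + ∑ k ∈ range (n + 1),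
            S2 n k * (((k:ℝ) - n*lam) * x ^ ((k:ℝ) - ((n:ℝ)+1)*lam)) * iteratedDeriv k f x := by
      rw [Finset.sum_congr rfl (fun k hk => by
        rw [hrec k (Finset.mem_range.mp hk)])]
      simp only [add_mul]
      rw [Finset.sum_add_distrib]
      congr 1
      · rw [Finset.sum_range_succ']
        simp only [Nat.le_refl, le_add_iff_nonneg_left, zero_le, if_pos, Nat.add_sub_cancel,
          Nat.not_succ_le_zero, if_neg (by omega : ¬ (1:ℕ) ≤ 0), zero_mul, add_zero]
        refine Finset.sum_congr rfl fun k _ => ?_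
        push_cast
        ring
      · rw [Finset.sum_range_succ, if_neg (by omega : ¬ n + 1 ≤ n)]
        simp only [zero_mul, add_zero]
        refine Finset.sum_congr rfl fun k hk => ?_
        rw [if_pos (Nat.lt_succ_iff.mp (Finset.mem_range.mp hk))]
        push_cast
        ring
    rw [show (n + 1 + 1) = n + 2 from rfl, hRHS, add_comm]
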